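/- For K ≥ 3 and any fixed index s, the set {c_{(s,j,k)} : j < k, j ≠ s, k ≠ s} of (K−1)(K−2)/2 vectors is linearly independent, and hence forms a basis of the cyclic space C. -/

import Mathlib

open scoped RealInnerProductSpace BigOperators

/-- Index set of lexicographically ordered pairs `(s,t)` with `s < t` in `Fin K`. -/
abbrev PairIdx (K : ℕ) := {p : Fin K × Fin K // p.1 < p.2}

/-- The vector `b_k` with `(s,t)` entry `𝟙(s=k) − 𝟙(t=k)`. -/
noncomputable def bvec (K : ℕ) (k : Fin K) : EuclideanSpace ℝ (PairIdx K) :=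
  WithLp.toLp 2 fun (p : PairIdx K) => (if p.1.1 = k then (1:ℝ) else 0) - (if p.1.2 = k then (1:ℝ) else 0)

/-- The cyclic vector `c_{(i,j,k)}`. -/
noncomputable def cvec (K : ℕ) (i j k : Fin K) : EuclideanSpace ℝ (PairIdx K) :=
  WithLp.toLp 2 fun (p : PairIdx K) =>
    (if (p.1.1, p.1.2) = (i, j) ∨ (p.1.1, p.1.2) = (j, k) ∨ (p.1.1, p.1.2) = (k, i)
      then (1:ℝ) else 0)
    - (if (p.1.1, p.1.2) = (j, i) ∨ (p.1.1, p.1.2) = (k, j) ∨ (p.1.1, p.1.2) = (i, k)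
      then (1:ℝ) else 0)
/-- The family of cyclic vectors anchored at a fixed index `s`. -/
noncomputable def cfam (K : ℕ) (s : Fin K)
    (p : {p : Fin K × Fin K // p.1 < p.2 ∧ p.1 ≠ s ∧ p.2 ≠ s}) :
    EuclideanSpace ℝ (PairIdx K) :=
  cvec K s p.1.1 p.1.2

/-!
Write `pairGrad K φ` for the vector `(φ u - φ v)_{u<v}`. Each `b_k` is the gradient of the
indicator of `k`, and for distinct `i, j, k` the vector `c_{(i,j,k)}` is the sum of the three
oriented edges `ij, jk, ki`, whose pairings with a gradient telescope to `0`; so every `c` lies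
in `C`. The anchored vectors are independent because `c_{(s,j,k)}` is the only one with a nonzero
`(j,k)` coordinate among the pairs avoiding `s`, and the `b_k` with `k ≠ s` are independent because
`b_k` is the only one pairing nontrivially with the edge `ks`. Hence
`dim C ≤ K(K-1)/2 - (K-1) = (K-1)(K-2)/2`, the number of anchored vectors.
-/

open Module Submodule Set

noncomputable def pairGrad (K : ℕ) : (Fin K → ℝ) →ₗ[ℝ] EuclideanSpace ℝ (PairIdx K) where
  toFun φ := WithLp.toLp 2 fun p => φ p.1.1 - φ p.1.2
  map_add' φ ψ := by ext; simp; ring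
  map_smul' c φ := by ext; simp; ring

noncomputable def orientedEdge (K : ℕ) (a b : Fin K) : EuclideanSpace ℝ (PairIdx K) :=
  WithLp.toLp 2 fun p => (if p.1 = (a, b) then (1 : ℝ) else 0) - (if p.1 = (b, a) then 1 else 0)

theorem linearIndependent_of_inner_eq_ite {𝕜 ι E : Type*} [RCLike 𝕜] [DecidableEq ι]
    [NormedAddCommGroup E] [InnerProductSpace 𝕜 E] {v w : ι → E}
    (h : ∀ i j, inner 𝕜 (w i) (v j) = if i = j then 1 else 0) : LinearIndependent 𝕜 v := by
  rw [linearIndependent_iff']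
  intro t g hg i hi
  simpa [inner_sum, inner_smul_right, h, hi] using congrArg (inner 𝕜 (w i)) hg

theorem Fintype.card_subtype_fst_lt_snd (α : Type*) [Fintype α] [LinearOrder α] :
    Fintype.card {p : α × α // p.1 < p.2} = (Fintype.card α).choose 2 := by
  rw [Fintype.card_subtype]
  exact Fintype.card_product_filter_lt

section

variable {K : ℕ}

theorem bvec_eq_pairGrad (k : Fin K) :
    bvec K k = pairGrad K (fun u => if u = k then 1 else 0) :=
  rfl

theorem orientedEdge_of_lt {a b : Fin K} (h : a < b) :
    orientedEdge K a b = EuclideanSpace.single ⟨(a, b), h⟩ 1 := by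
  ext p
  have : p.1 ≠ (b, a) := fun hp => (p.2.trans (hp ▸ h)).false
  simp [orientedEdge, this, Subtype.ext_iff]

theorem orientedEdge_swap (a b : Fin K) : orientedEdge K b a = -orientedEdge K a b := by
  ext p
  simp [orientedEdge]

theorem inner_orientedEdge_pairGrad {a b : Fin K} (hab : a ≠ b) (φ : Fin K → ℝ) :
    ⟪orientedEdge K a b, pairGrad K φ⟫ = φ a - φ b := by
  rcases hab.lt_or_gt with h | h
  · simp [orientedEdge_of_lt h, EuclideanSpace.inner_single_left, pairGrad]
  · rw [← neg_neg (orientedEdge K a b), ← orientedEdge_swap, inner_neg_left, orientedEdge_of_lt h]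
    simp [EuclideanSpace.inner_single_left, pairGrad]

theorem cvec_eq_orientedEdge_add {i j k : Fin K} (hij : i ≠ j) (hjk : j ≠ k) (hki : k ≠ i) :
    cvec K i j k = orientedEdge K i j + orientedEdge K j k + orientedEdge K k i := by
  ext p
  simp only [cvec, orientedEdge, PiLp.add_apply, Prod.mk.eta]
  split_ifs <;> simp_all [Prod.ext_iff]

theorem inner_cvec_pairGrad {i j k : Fin K} (hij : i ≠ j) (hjk : j ≠ k) (hki : k ≠ i)
    (φ : Fin K → ℝ) : ⟪cvec K i j k, pairGrad K φ⟫ = 0 := by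
  rw [cvec_eq_orientedEdge_add hij hjk hki]
  simp only [inner_add_left, inner_orientedEdge_pairGrad, hij, hjk, hki, ne_eq, not_false_eq_true]
  ring

theorem cvec_mem_orthogonal_span_bvec {i j k : Fin K} (hij : i ≠ j) (hjk : j ≠ k) (hki : k ≠ i) :
    cvec K i j k ∈ (span ℝ (range (bvec K)))ᗮ := by
  have hle : span ℝ (range (bvec K)) ≤ LinearMap.range (pairGrad K) := by
    rw [span_le]
    rintro _ ⟨k, rfl⟩
    exact ⟨_, (bvec_eq_pairGrad k).symm⟩
  refine orthogonal_le hle ?_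
  rw [mem_orthogonal']
  rintro _ ⟨φ, rfl⟩
  exact inner_cvec_pairGrad hij hjk hki φ

theorem linearIndependent_bvec_ne (s : Fin K) :
    LinearIndependent ℝ fun k : {k // k ≠ s} => bvec K k := by
  refine linearIndependent_of_inner_eq_ite (w := fun k => orientedEdge K k s) fun k m => ?_
  rw [bvec_eq_pairGrad, inner_orientedEdge_pairGrad k.2]
  simp [m.2.symm, Subtype.ext_iff]

theorem cfam_apply (s : Fin K) (p : {p : Fin K × Fin K // p.1 < p.2 ∧ p.1 ≠ s ∧ p.2 ≠ s})
    (q : PairIdx K) (hq : q.1.1 ≠ s ∧ q.1.2 ≠ s) :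
    cfam K s p q = if p.1 = q.1 then 1 else 0 := by
  obtain ⟨⟨j, k⟩, hjk, hj, hk⟩ := p
  obtain ⟨⟨u, v⟩, huv⟩ := q
  simp only [cfam, cvec, Prod.mk.injEq] at hq ⊢
  have : ¬(u = k ∧ v = j) := by rintro ⟨rfl, rfl⟩; exact (huv.trans hjk).false
  by_cases h : j = u ∧ k = v
  · obtain ⟨rfl, rfl⟩ := h; simp_all
  · grind

theorem linearIndependent_cfam (s : Fin K) : LinearIndependent ℝ (cfam K s) := by
  refine linearIndependent_of_inner_eq_ite
    (w := fun q => EuclideanSpace.single ⟨q.1, q.2.1⟩ 1) fun q p => ?_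
  rw [EuclideanSpace.inner_single_left, cfam_apply s p _ q.2.2]
  simp [Subtype.ext_iff, eq_comm]

theorem card_anchored (s : Fin K) :
    Fintype.card {p : Fin K × Fin K // p.1 < p.2 ∧ p.1 ≠ s ∧ p.2 ≠ s} = (K - 1).choose 2 := by
  let e : {p : Fin K × Fin K // p.1 < p.2 ∧ p.1 ≠ s ∧ p.2 ≠ s}
      ≃ {q : {x : Fin K // x ≠ s} × {x : Fin K // x ≠ s} // q.1 < q.2} :=
    { toFun := fun p => ⟨(⟨p.1.1, p.2.2.1⟩, ⟨p.1.2, p.2.2.2⟩), p.2.1⟩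
      invFun := fun q => ⟨(q.1.1, q.1.2), q.2, q.1.1.2, q.1.2.2⟩ }
  rw [Fintype.card_congr e, Fintype.card_subtype_fst_lt_snd, Fintype.card_subtype_compl,
    Fintype.card_fin, Fintype.card_unique]

theorem finrank_orthogonal_span_bvec_le (s : Fin K) :
    finrank ℝ (span ℝ (range (bvec K)))ᗮ ≤ (K - 1).choose 2 := by
  have hb : K - 1 ≤ finrank ℝ (span ℝ (range (bvec K))) :=
    calc K - 1 = finrank ℝ (span ℝ (range fun k : {k // k ≠ s} => bvec K k)) := by
          rw [finrank_span_eq_card (linearIndependent_bvec_ne s)]; simp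
      _ ≤ _ := finrank_mono (span_mono (range_comp_subset_range Subtype.val (bvec K)))
  have htotal := (span ℝ (range (bvec K))).finrank_add_finrank_orthogonal
  rw [finrank_euclideanSpace, Fintype.card_subtype_fst_lt_snd, Fintype.card_fin] at htotal
  obtain ⟨n, rfl⟩ : ∃ n, K = n + 1 := ⟨K - 1, by have := s.pos; omega⟩
  have pascal : (n + 1).choose 2 = n.choose 2 + n := by
    rw [Nat.choose_succ_succ', Nat.choose_one_right, add_comm]
  simp only [add_tsub_cancel_right] at hb ⊢
  omega

end

theorem anchored_cvec_basis_general (K : ℕ) (s : Fin K) :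
    Fintype.card {p : Fin K × Fin K // p.1 < p.2 ∧ p.1 ≠ s ∧ p.2 ≠ s}
        = (K - 1) * (K - 2) / 2 ∧
    LinearIndependent ℝ (cfam K s) ∧
    Submodule.span ℝ (Set.range (cfam K s))
      = (Submodule.span ℝ (Set.range (bvec K)))ᗮ := by
  have hindep := linearIndependent_cfam s
  refine ⟨by rw [card_anchored, Nat.choose_two_right, Nat.sub_sub], hindep, ?_⟩
  refine eq_of_le_of_finrank_le ?_ ?_
  · rw [span_le]
    rintro _ ⟨⟨p, hlt, hj, hk⟩, rfl⟩
    exact cvec_mem_orthogonal_span_bvec (Ne.symm hj) hlt.ne hk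
  · rw [finrank_span_eq_card hindep, card_anchored]
    exact finrank_orthogonal_span_bvec_le s

theorem anchored_cvec_basis (K : ℕ) (hK : 3 ≤ K) (s : Fin K) :
    Fintype.card {p : Fin K × Fin K // p.1 < p.2 ∧ p.1 ≠ s ∧ p.2 ≠ s}
        = (K - 1) * (K - 2) / 2 ∧
    LinearIndependent ℝ (cfam K s) ∧
    Submodule.span ℝ (Set.range (cfam K s))
      = (Submodule.span ℝ (Set.range (bvec K)))ᗮ :=
  anchored_cvec_basis_general K s
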